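/- Let X, Y : [0,T] → ℝ be continuous. Then the integration by parts formula holds: X(t)Y(t) = X(0)Y(0) + ∫₀ᵗ X d⁻Y + ∫₀ᵗ Y d⁺X, in the sense that I⁻(ε,X,dY)(t) + I⁺(ε,Y,dX)(t) converges to X(t)Y(t) − X(0)Y(0) uniformly in t ∈ [0,T] as ε → 0⁺. -/
import Mathlib


open MeasureTheory Filter Set

/-- `f` is extended constantly outside `[0,T]`. -/
def ExtConst (T : ℝ) (f : ℝ → ℝ) : Prop :=
  (∀ t ≤ (0:ℝ), f t = f 0) ∧ ∀ t, T ≤ t → f t = f T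

/-- The `ε`-forward integral `I⁻(ε,Y,dX)(t)`. -/
noncomputable def Iminus (ε : ℝ) (Y X : ℝ → ℝ) (t : ℝ) : ℝ :=
  ∫ s in (0:ℝ)..t, Y s * (X (s + ε) - X s) / ε

/-- The `ε`-backward integral `I⁺(ε,Y,dX)(t)`. -/
noncomputable def Iplus (ε : ℝ) (Y X : ℝ → ℝ) (t : ℝ) : ℝ :=
  ∫ s in (0:ℝ)..t, Y s * (X s - X (s - ε)) / ε

lemma key_identity (ε : ℝ) (X Y : ℝ → ℝ) (hX : Continuous X) (hY : Continuous Y) (t : ℝ) :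
    (∫ s in (0:ℝ)..t, X s * (Y (s + ε) - Y s) / ε) +
      (∫ s in (0:ℝ)..t, Y s * (X s - X (s - ε)) / ε) =
    (∫ s in (t-ε)..t, X s * Y (s + ε) / ε) - (∫ s in (-ε)..(0:ℝ), X s * Y (s + ε) / ε) := by
  set f : ℝ → ℝ := fun s => X s * Y (s + ε) / ε with hf
  have hfc : Continuous f := by fun_prop
  have hI : ∀ a b : ℝ, IntervalIntegrable f volume a b := fun a b =>
    hfc.intervalIntegrable a b
  have hgc : Continuous (fun s => X s * Y s / ε) := by fun_prop
  have hgI : ∀ a b : ℝ, IntervalIntegrable (fun s => X s * Y s / ε) volume a b := fun a b =>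
    hgc.intervalIntegrable a b
  have h1 : (∫ s in (0:ℝ)..t, X s * (Y (s + ε) - Y s) / ε)
      = (∫ s in (0:ℝ)..t, f s) - ∫ s in (0:ℝ)..t, X s * Y s / ε := by
    rw [← intervalIntegral.integral_sub (hI 0 t) (hgI 0 t)]
    apply intervalIntegral.integral_congr
    intro s _
    simp only [hf]
    ring
  have h2 : (∫ s in (0:ℝ)..t, Y s * (X s - X (s - ε)) / ε)
      = (∫ s in (0:ℝ)..t, X s * Y s / ε) - ∫ s in (-ε)..(t-ε), f s := by
    have hsub : (∫ s in (0:ℝ)..t, f (s - ε)) = ∫ s in (0-ε)..(t-ε), f s :=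
      intervalIntegral.integral_comp_sub_right f ε
    have hfsc : Continuous (fun s => f (s - ε)) := hfc.comp (by fun_prop)
    have e1 : (∫ s in (0:ℝ)..t, Y s * (X s - X (s - ε)) / ε)
        = ∫ s in (0:ℝ)..t, (X s * Y s / ε - f (s - ε)) := by
      apply intervalIntegral.integral_congr
      intro s _
      simp only [hf, sub_add_cancel]
      ring
    rw [e1, intervalIntegral.integral_sub (hgI 0 t) (hfsc.intervalIntegrable 0 t), hsub]
    norm_num
  have h3 : (∫ s in (-ε)..(0:ℝ), f s) + (∫ s in (0:ℝ)..t, f s) = ∫ s in (-ε)..t, f s :=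
    intervalIntegral.integral_add_adjacent_intervals (hI _ _) (hI _ _)
  have h4 : (∫ s in (-ε)..(t-ε), f s) + (∫ s in (t-ε)..t, f s) = ∫ s in (-ε)..t, f s :=
    intervalIntegral.integral_add_adjacent_intervals (hI _ _) (hI _ _)
  rw [h1, h2]
  linarith

lemma avg_est (ε : ℝ) (hε : 0 < ε) (t₀ : ℝ) (X Y : ℝ → ℝ)
    (hX : Continuous X) (hY : Continuous Y) (C : ℝ)
    (hb : ∀ s ∈ Ioc (t₀ - ε) t₀, |X s * Y (s + ε) - X t₀ * Y t₀| ≤ C) :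
    |(∫ s in (t₀-ε)..t₀, X s * Y (s + ε) / ε) - X t₀ * Y t₀| ≤ C := by
  have hle : t₀ - ε ≤ t₀ := by linarith
  have hconst : (∫ s in (t₀-ε)..t₀, (X t₀ * Y t₀) / ε) = X t₀ * Y t₀ := by
    rw [intervalIntegral.integral_const]
    have : t₀ - (t₀ - ε) = ε := by ring
    rw [this, smul_eq_mul]
    field_simp
  have hfc : Continuous (fun s => X s * Y (s + ε) / ε) := by fun_prop
  have hcc : Continuous (fun _ : ℝ => X t₀ * Y t₀ / ε) := continuous_const
  have hsplit : (∫ s in (t₀-ε)..t₀, (X s * Y (s + ε) - X t₀ * Y t₀) / ε)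
      = (∫ s in (t₀-ε)..t₀, X s * Y (s + ε) / ε)
        - ∫ s in (t₀-ε)..t₀, (X t₀ * Y t₀) / ε := by
    rw [← intervalIntegral.integral_sub (hfc.intervalIntegrable _ _)
        (hcc.intervalIntegrable _ _)]
    apply intervalIntegral.integral_congr
    intro s _
    ring
  have hsub : (∫ s in (t₀-ε)..t₀, X s * Y (s + ε) / ε) - X t₀ * Y t₀
      = ∫ s in (t₀-ε)..t₀, (X s * Y (s + ε) - X t₀ * Y t₀) / ε := by
    rw [hsplit, hconst]
  rw [hsub, ← Real.norm_eq_abs]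
  have hbound : ∀ s ∈ Set.uIoc (t₀ - ε) t₀,
      ‖(X s * Y (s + ε) - X t₀ * Y t₀) / ε‖ ≤ C / ε := by
    intro s hs
    rw [Set.uIoc_of_le hle] at hs
    rw [norm_div, Real.norm_eq_abs, Real.norm_eq_abs, abs_of_pos hε]
    gcongr
    exact hb s hs
  calc ‖∫ s in (t₀-ε)..t₀, (X s * Y (s + ε) - X t₀ * Y t₀) / ε‖
      ≤ (C / ε) * |t₀ - (t₀ - ε)| :=
        intervalIntegral.norm_integral_le_of_norm_le_const hbound
    _ = C := by
        rw [show t₀ - (t₀ - ε) = ε by ring, abs_of_pos hε]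
        field_simp

/-- integration by parts:
`I⁻(ε,X,dY)(t) + I⁺(ε,Y,dX)(t) → X(t)Y(t) − X(0)Y(0)` uniformly on `[0,T]`. -/
theorem stmt4 (T : ℝ) (hT : 0 < T) (X Y : ℝ → ℝ)
    (hX : Continuous X) (hY : Continuous Y)
    (hXe : ExtConst T X) (hYe : ExtConst T Y) :
    TendstoUniformlyOn (fun ε t => Iminus ε X Y t + Iplus ε Y X t)
      (fun t => X t * Y t - X 0 * Y 0)
      (nhdsWithin 0 (Set.Ioi 0)) (Set.Icc 0 T) := by
  rw [Metric.tendstoUniformlyOn_iff]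
  intro δ hδ
  set K : Set ℝ := Icc (-1 : ℝ) (T + 1) with hKdef
  have hK : IsCompact K := isCompact_Icc
  have hmem : (-1 : ℝ) ∈ K := by constructor <;> [rfl; linarith]
  obtain ⟨MX, hMX⟩ := hK.exists_bound_of_continuousOn hX.continuousOn
  obtain ⟨MY, hMY⟩ := hK.exists_bound_of_continuousOn hY.continuousOn
  set M : ℝ := max MX MY with hMdef
  have hM0 : 0 ≤ M := le_trans (norm_nonneg (X (-1))) ((hMX _ hmem).trans (le_max_left _ _))
  have hXb : ∀ s ∈ K, |X s| ≤ M := fun s hs => (hMX s hs).trans (le_max_left _ _)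
  have hYb : ∀ s ∈ K, |Y s| ≤ M := fun s hs => (hMY s hs).trans (le_max_right _ _)
  set η : ℝ := δ / (8 * (M + 1)) with hηdef
  have hη : 0 < η := by positivity
  have hXu := hK.uniformContinuousOn_of_continuous hX.continuousOn
  have hYu := hK.uniformContinuousOn_of_continuous hY.continuousOn
  rw [Metric.uniformContinuousOn_iff] at hXu hYu
  obtain ⟨δX, hδX, hXuc⟩ := hXu η hη
  obtain ⟨δY, hδY, hYuc⟩ := hYu η hη
  set θ : ℝ := min 1 (min δX δY) with hθdef
  have hθ : 0 < θ := by
    apply lt_min one_pos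
    exact lt_min hδX hδY
  filter_upwards [Ioo_mem_nhdsGT_of_mem (show (0:ℝ) ∈ Ico 0 θ from ⟨le_refl _, hθ⟩)]
    with ε hε t ht
  obtain ⟨hε0, hεθ⟩ := hε
  have hε1 : ε ≤ 1 := le_trans hεθ.le (min_le_left _ _)
  have hεX : ε < δX := lt_of_lt_of_le hεθ ((min_le_right _ _).trans (min_le_left _ _))
  have hεY : ε < δY := lt_of_lt_of_le hεθ ((min_le_right _ _).trans (min_le_right _ _))
  -- main pointwise estimate
  have claim : ∀ t₀ ∈ Icc (0:ℝ) T, ∀ s ∈ Ioc (t₀ - ε) t₀,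
      |X s * Y (s + ε) - X t₀ * Y t₀| ≤ δ / 4 := by
    intro t₀ ht₀ s hs
    have hsK : s ∈ K := ⟨by nlinarith [hs.1, ht₀.1], by linarith [hs.2, ht₀.2]⟩
    have hsεK : s + ε ∈ K := ⟨by nlinarith [hs.1, ht₀.1], by linarith [hs.2, ht₀.2]⟩
    have ht₀K : t₀ ∈ K := ⟨by linarith [ht₀.1], by linarith [ht₀.2]⟩
    have hdistX : dist s t₀ < δX := by
      rw [Real.dist_eq, abs_lt]
      constructor <;> [linarith [hs.1]; linarith [hs.2]]
    have hdistY : dist (s + ε) t₀ < δY := by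
      rw [Real.dist_eq, abs_lt]
      constructor <;> [linarith [hs.1]; linarith [hs.2]]
    have hXd : |X s - X t₀| ≤ η := le_of_lt (by
      have := hXuc s hsK t₀ ht₀K hdistX
      rwa [Real.dist_eq] at this)
    have hYd : |Y (s + ε) - Y t₀| ≤ η := le_of_lt (by
      have := hYuc (s + ε) hsεK t₀ ht₀K hdistY
      rwa [Real.dist_eq] at this)
    have e : X s * Y (s + ε) - X t₀ * Y t₀
        = X s * (Y (s + ε) - Y t₀) + Y t₀ * (X s - X t₀) := by ring
    calc |X s * Y (s + ε) - X t₀ * Y t₀|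
        ≤ |X s * (Y (s + ε) - Y t₀)| + |Y t₀ * (X s - X t₀)| := by
          rw [e]; exact abs_add_le _ _
      _ = |X s| * |Y (s + ε) - Y t₀| + |Y t₀| * |X s - X t₀| := by
          rw [abs_mul, abs_mul]
      _ ≤ M * η + M * η := by
          gcongr
          · exact hXb s hsK
          · exact hYb t₀ ht₀K
      _ ≤ δ / 4 := by
          rw [hηdef, show M * (δ / (8 * (M + 1))) + M * (δ / (8 * (M + 1)))
            = (2 * M) * δ / (8 * (M + 1)) by ring,
            div_le_div_iff₀ (by positivity) (by norm_num)]
          nlinarith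
  have estA : |(∫ s in (t-ε)..t, X s * Y (s + ε) / ε) - X t * Y t| ≤ δ / 4 :=
    avg_est ε hε0 t X Y hX hY (δ/4) (claim t ht)
  have estB : |(∫ s in (-ε)..(0:ℝ), X s * Y (s + ε) / ε) - X 0 * Y 0| ≤ δ / 4 := by
    have h0 : (0:ℝ) ∈ Icc (0:ℝ) T := ⟨le_refl _, hT.le⟩
    have := avg_est ε hε0 0 X Y hX hY (δ/4) (by
      intro s hs
      exact claim 0 h0 s (by simpa using hs))
    simpa using this
  rw [Real.dist_eq]
  show |(X t * Y t - X 0 * Y 0) - (Iminus ε X Y t + Iplus ε Y X t)| < δ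
  rw [show Iminus ε X Y t + Iplus ε Y X t
      = (∫ s in (t-ε)..t, X s * Y (s + ε) / ε) - (∫ s in (-ε)..(0:ℝ), X s * Y (s + ε) / ε)
      from key_identity ε X Y hX hY t]
  set A := ∫ s in (t-ε)..t, X s * Y (s + ε) / ε
  set B := ∫ s in (-ε)..(0:ℝ), X s * Y (s + ε) / ε
  have e : (X t * Y t - X 0 * Y 0) - (A - B) = (X t * Y t - A) + (B - X 0 * Y 0) := by ring
  rw [e]
  calc |(X t * Y t - A) + (B - X 0 * Y 0)|
      ≤ |X t * Y t - A| + |B - X 0 * Y 0| := abs_add_le _ _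
    _ = |A - X t * Y t| + |B - X 0 * Y 0| := by rw [abs_sub_comm]
    _ ≤ δ / 4 + δ / 4 := add_le_add estA estB
    _ < δ := by linarith
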